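/- Failure of transitivity: there exist a probability space and nonnegative random variables f, g, h such that rel(f|g) ≤ 0 and rel(g|h) ≤ 0 but rel(f|h) > 0. Concretely, on a two-point space with P[A] = p ∈ (0,1), take f = (1/p)·1_A, g = 1, h = (2p/(1+p))·1_A + 2·1_{Aᶜ}; then rel(f|g) = 0, rel(g|h) = 0, and rel(f|h) = (1-p)/(2p) > 0. -/

import Mathlib

open MeasureTheory
open scoped ENNReal Classical

/-- Division of nonnegative reals with the conventions `x / 0 = ∞` for `x > 0`
and `0 / 0 = 1`, valued in `ℝ≥0∞`. -/
noncomputable def qdiv (x y : ℝ) : ℝ≥0∞ :=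
  if x = 0 ∧ y = 0 then 1 else if y = 0 then ⊤ else ENNReal.ofReal (x / y)

/-! All three ratios are constant on `A` and on `Aᶜ`, so each expectation is a two-term sum
`(a/c) p + (b/d)(1 - p)`; the claims are then identities between rational functions of `p`. -/

lemma qdiv_of_ne_zero (x : ℝ) {y : ℝ} (hy : y ≠ 0) : qdiv x y = ENNReal.ofReal (x / y) := by
  simp [qdiv, hy]

lemma lintegral_ite_const {Ω : Type*} [MeasurableSpace Ω] (P : Measure Ω)
    {A : Set Ω} (hA : MeasurableSet A) (c₁ c₂ : ℝ≥0∞) :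
    ∫⁻ ω, (if ω ∈ A then c₁ else c₂) ∂P = c₁ * P A + c₂ * P Aᶜ := by
  rw [← setLIntegral_const, ← setLIntegral_const]
  exact lintegral_piecewise hA (fun _ => c₁) (fun _ => c₂)

lemma lintegral_qdiv_ite {Ω : Type*} [MeasurableSpace Ω] {P : Measure Ω}
    [IsProbabilityMeasure P] {A : Set Ω} (hA : MeasurableSet A) {p : ℝ} (hp0 : 0 ≤ p)
    (hp1 : p ≤ 1) (hPA : P A = ENNReal.ofReal p) {a b c d : ℝ} (hc : c ≠ 0) (hd : d ≠ 0)
    (hac : 0 ≤ a / c) (hbd : 0 ≤ b / d) :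
    ∫⁻ ω, qdiv (if ω ∈ A then a else b) (if ω ∈ A then c else d) ∂P
      = ENNReal.ofReal (a / c * p + b / d * (1 - p)) := by
  have hPAc : P Aᶜ = ENNReal.ofReal (1 - p) := by
    rw [prob_compl_eq_one_sub hA, hPA, ← ENNReal.ofReal_one, ← ENNReal.ofReal_sub _ hp0]
  simp only [apply_ite₂ qdiv, qdiv_of_ne_zero _ hc, qdiv_of_ne_zero _ hd]
  rw [lintegral_ite_const P hA, hPA, hPAc, ENNReal.ofReal_add (by positivity)
    (mul_nonneg hbd (by linarith)), ENNReal.ofReal_mul hac, ENNReal.ofReal_mul hbd]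

/-- Failure of transitivity: with `P[A] = p ∈ (0,1)`, `f = (1/p)·1_A`, `g = 1`,
`h = (2p/(1+p))·1_A + 2·1_{Aᶜ}`, one has `rel(f|g) = 0`, `rel(g|h) = 0`, and
`rel(f|h) = (1-p)/(2p) > 0`. -/
theorem stmt6 {Ω : Type*} [MeasurableSpace Ω] (P : Measure Ω) [IsProbabilityMeasure P]
    (A : Set Ω) (hA : MeasurableSet A)
    (p : ℝ) (hp0 : 0 < p) (hp1 : p < 1) (hPA : P A = ENNReal.ofReal p)
    (f g h : Ω → ℝ)
    (hf : f = fun ω => if ω ∈ A then 1 / p else 0)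
    (hg : g = fun _ => 1)
    (hh : h = fun ω => if ω ∈ A then 2 * p / (1 + p) else 2) :
    (∫⁻ ω, qdiv (f ω) (g ω) ∂P = 1) ∧
    (∫⁻ ω, qdiv (g ω) (h ω) ∂P = 1) ∧
    (∫⁻ ω, qdiv (f ω) (h ω) ∂P = 1 + ENNReal.ofReal ((1 - p) / (2 * p))) ∧
    (1 < ∫⁻ ω, qdiv (f ω) (h ω) ∂P) := by
  subst hf hg hh
  have hh_ne : 2 * p / (1 + p) ≠ 0 := by positivity
  have hfg := lintegral_qdiv_ite hA hp0.le hp1.le hPA (a := 1 / p) (b := 0) one_ne_zero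
    one_ne_zero (by positivity) (by norm_num)
  have hgh := lintegral_qdiv_ite hA hp0.le hp1.le hPA (a := 1) (b := 1) hh_ne two_ne_zero
    (by positivity) (by norm_num)
  have hfh := lintegral_qdiv_ite hA hp0.le hp1.le hPA (a := 1 / p) (b := 0) hh_ne two_ne_zero
    (by positivity) (by norm_num)
  simp only [ite_self] at hfg hgh
  have hgap : 0 < (1 - p) / (2 * p) := by apply div_pos <;> linarith
  have hfh' : ∫⁻ ω, qdiv (if ω ∈ A then 1 / p else 0) (if ω ∈ A then 2 * p / (1 + p) else 2) ∂P
      = 1 + ENNReal.ofReal ((1 - p) / (2 * p)) := by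
    rw [hfh, ← ENNReal.ofReal_one, ← ENNReal.ofReal_add zero_le_one hgap.le]
    congr 1
    field_simp
    ring
  refine ⟨?_, ?_, hfh', ?_⟩
  · rw [hfg, ← ENNReal.ofReal_one]
    congr 1
    field_simp
    ring
  · rw [hgh, ← ENNReal.ofReal_one]
    congr 1
    field_simp
    ring
  · rw [hfh']
    exact ENNReal.lt_add_right ENNReal.one_ne_top (ENNReal.ofReal_pos.2 hgap).ne'
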